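/- Let ε > 0, β₂ < 0, and define Ω_ε ⊂ ℂ in polar coordinates z = ρe^{iθ} (θ ∈ [−π,π]) by: ρ ≤ ε if |θ| ≤ π/2, and ρ ≤ ε|sin θ| if |θ| ∈ (π/2, π]. If g_r ∈ Ω_ε ∖ {0} and g(t) is defined by 1/g(t) = 1/g_r − β₂t, then |g(t)| ≤ ε for all t ≥ 0. -/

import Mathlib

open Complex Real

/-!
Write `1/g(t) = 1/g_r + s` with `s = -β₂ t ≥ 0`, a horizontal translation to the right.
On the half-disk part of `Ω_ε` the point `1/g_r` lies in the closed right half-plane, where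
such a translation can only increase the modulus, so `|g(t)| ≤ |g_r| ≤ ε`. The two small
half-disks lie in the disks `|z|² ≤ ε |Im z|`, which inversion maps onto `|Im w| ≥ 1/ε`,
a region that horizontal translations preserve.
-/

namespace Complex

theorem norm_le_norm_add_ofReal {z : ℂ} {s : ℝ} (hz : 0 ≤ z.re) (hs : 0 ≤ s) :
    ‖z‖ ≤ ‖z + s‖ := by
  rw [← sq_le_sq₀ (norm_nonneg _) (norm_nonneg _), Complex.sq_norm, Complex.sq_norm,
    normSq_apply, normSq_apply]
  simp only [add_re, ofReal_re, add_im, ofReal_im, add_zero]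
  nlinarith

theorem norm_inv_inv_add_ofReal_le {z : ℂ} {s : ℝ} (hz : z ≠ 0) (hre : 0 ≤ z.re)
    (hs : 0 ≤ s) : ‖(z⁻¹ + s)⁻¹‖ ≤ ‖z‖ := by
  have hre_inv : 0 ≤ z⁻¹.re := by
    rw [inv_re]
    exact div_nonneg hre (normSq_nonneg z)
  calc ‖(z⁻¹ + s)⁻¹‖ = ‖z⁻¹ + s‖⁻¹ := norm_inv _
    _ ≤ ‖z⁻¹‖⁻¹ :=
      inv_anti₀ (norm_pos_iff.2 (inv_ne_zero hz)) (norm_le_norm_add_ofReal hre_inv hs)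
    _ = ‖z‖ := by rw [norm_inv, inv_inv]

theorem norm_inv_inv_add_ofReal_le_of_sq_norm_le_mul_abs_im {z : ℂ} {ε : ℝ} (hz : z ≠ 0)
    (h : ‖z‖ ^ 2 ≤ ε * |z.im|) (s : ℝ) : ‖(z⁻¹ + s)⁻¹‖ ≤ ε := by
  have hnorm : 0 < ‖z‖ ^ 2 := by positivity
  have him : 0 < |z.im| := by
    by_contra! him
    nlinarith [abs_nonneg z.im, abs_nonneg ε, le_abs_self ε]
  have hw : |z.im| / ‖z‖ ^ 2 ≤ ‖z⁻¹ + s‖ := by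
    calc |z.im| / ‖z‖ ^ 2 = |(z⁻¹ + s).im| := by
          rw [add_im, ofReal_im, add_zero, inv_im, normSq_eq_norm_sq, abs_div, abs_neg,
            abs_of_pos hnorm]
      _ ≤ ‖z⁻¹ + s‖ := abs_im_le_norm _
  have hw0 : 0 < |z.im| / ‖z‖ ^ 2 := div_pos him hnorm
  calc ‖(z⁻¹ + s)⁻¹‖ = ‖z⁻¹ + s‖⁻¹ := norm_inv _
    _ ≤ (|z.im| / ‖z‖ ^ 2)⁻¹ := inv_anti₀ hw0 hw
    _ = ‖z‖ ^ 2 / |z.im| := inv_div _ _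
    _ ≤ ε := (div_le_iff₀ him).2 (by linarith)

theorem sq_norm_le_mul_abs_im_of_norm_le_mul_abs_sin_arg {z : ℂ} {ε : ℝ}
    (h : ‖z‖ ≤ ε * |Real.sin (arg z)|) : ‖z‖ ^ 2 ≤ ε * |z.im| := by
  rcases eq_or_ne z 0 with rfl | hz
  · simp
  have hnorm : 0 < ‖z‖ := norm_pos_iff.2 hz
  rw [sin_arg, abs_div, abs_of_pos hnorm, ← mul_div_assoc, le_div_iff₀ hnorm] at h
  linarith [sq ‖z‖]

end Complex

theorem quadratic_flow_uniform_bound_general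
    (ε : ℝ)
    (β₂ : ℝ) (hβ₂ : β₂ < 0)
    (gr : ℂ) (hgr0 : gr ≠ 0)
    (hΩ : (|Complex.arg gr| ≤ π / 2 → ‖gr‖ ≤ ε) ∧
          (π / 2 < |Complex.arg gr| → ‖gr‖ ≤ ε * |Real.sin (Complex.arg gr)|))
    (t : ℝ) (ht : 0 ≤ t)
    (gt : ℂ)
    (hflow : gt⁻¹ = gr⁻¹ - (β₂ : ℂ) * t) :
    ‖gt‖ ≤ ε := by
  have hs : 0 ≤ -β₂ * t := mul_nonneg (neg_nonneg.2 hβ₂.le) ht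
  have hgt : gt = (gr⁻¹ + ((-β₂ * t : ℝ) : ℂ))⁻¹ := by
    rw [← inv_inv gt, hflow]
    push_cast
    ring
  rw [hgt]
  rcases le_or_gt |arg gr| (π / 2) with h | h
  · exact (norm_inv_inv_add_ofReal_le hgr0 (abs_arg_le_pi_div_two_iff.1 h) hs).trans (hΩ.1 h)
  · exact norm_inv_inv_add_ofReal_le_of_sq_norm_le_mul_abs_im hgr0
      (sq_norm_le_mul_abs_im_of_norm_le_mul_abs_sin_arg (hΩ.2 h)) _

/-- Uniform boundedness of the quadratic flow on the domain `Ω_ε`: if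
`g_r ∈ Ω_ε ∖ {0}` (i.e. `|g_r| ≤ ε` when `|arg g_r| ≤ π/2`, and
`|g_r| ≤ ε|sin(arg g_r)|` when `π/2 < |arg g_r| ≤ π`) and
`1/g(t) = 1/g_r − β₂t` with `β₂ < 0`, then `|g(t)| ≤ ε` for all `t ≥ 0`. -/
theorem quadratic_flow_uniform_bound
    (ε : ℝ) (hε : 0 < ε)
    (β₂ : ℝ) (hβ₂ : β₂ < 0)
    (gr : ℂ) (hgr0 : gr ≠ 0)
    (hΩ : (|Complex.arg gr| ≤ π / 2 → ‖gr‖ ≤ ε) ∧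
          (π / 2 < |Complex.arg gr| → ‖gr‖ ≤ ε * |Real.sin (Complex.arg gr)|))
    (t : ℝ) (ht : 0 ≤ t)
    (gt : ℂ) (hgt : gt ≠ 0)
    (hflow : gt⁻¹ = gr⁻¹ - (β₂ : ℂ) * t) :
    ‖gt‖ ≤ ε :=
  quadratic_flow_uniform_bound_general ε β₂ hβ₂ gr hgr0 hΩ t ht gt hflow
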